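/- Let V₁ and V₂ be vertex operator algebras. The map F : A(V₁ ⊗ V₂) → A(V₁) ⊗ A(V₂) sending [a ⊗ b] to [a] ⊗ [b] is a well-defined isomorphism of associative unital algebras. -/

import Mathlib

open scoped TensorProduct BigOperators

noncomputable section

/-- A vertex operator algebra structure (in coefficient form) on a complex vector space `V`.
`op n a b` is the coefficient `a(n)b` of `Y(a,z)b = ∑ₙ a(n)b z^{-n-1}`; `grade n` is the
weight space `V_n`; Borcherds' identity encodes the Jacobi identity. -/
structure VOA (V : Type) [AddCommGroup V] [Module ℂ V] where
  op : ℤ → V →ₗ[ℂ] V →ₗ[ℂ] V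
  grade : ℤ → Submodule ℂ V
  vacuum : V
  omega : V
  isInternal : DirectSum.IsInternal grade
  vacuum_grade : vacuum ∈ grade 0
  omega_grade : omega ∈ grade 2
  trunc : ∀ a b : V, ∃ N : ℤ, ∀ n ≥ N, op n a b = 0
  vacuum_op : ∀ (n : ℤ) (b : V), op n vacuum b = if n = -1 then b else 0
  create : ∀ (a : V) (n : ℤ), 0 ≤ n → op n a vacuum = 0
  create_neg_one : ∀ a : V, op (-1) a vacuum = a
  deriv : ∀ (n : ℤ) (a b : V), op n (op 0 omega a) b = (-n) • op (n - 1) a b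
  L_zero_grade : ∀ n : ℤ, ∀ a ∈ grade n, op 1 omega a = (n : ℂ) • a
  L_neg_one_grade : ∀ n : ℤ, ∀ a ∈ grade n, op 0 omega a ∈ grade (n + 1)
  op_grade : ∀ (p q n : ℤ), ∀ a ∈ grade p, ∀ b ∈ grade q, op n a b ∈ grade (p + q - n - 1)
  borcherds : ∀ (m n k : ℤ) (a b c : V),
    ∑ᶠ j : ℕ, Ring.choose m j • op (m + k - j) (op (n + j) a b) c =
    ∑ᶠ j : ℕ, ((-1 : ℤ) ^ j * Ring.choose n j) •
      (op (m + n - j) a (op (k + j) b c) -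
        (if Even n then (1 : ℤ) else -1) • op (n + k - j) b (op (m + j) a c))

namespace VOA

variable {V : Type} [AddCommGroup V] [Module ℂ V] (A : VOA V)

/-- `A.circm w m a b = Res_z ((1+z)^w / z^m) Y(a,z)b = ∑_{i≥0} C(w,i) a(i-m)b`
(for `a` homogeneous of weight `w`). -/
def circm (w m : ℤ) (a b : V) : V :=
  ∑ᶠ i : ℕ, Ring.choose w i • A.op ((i : ℤ) - m) a b

/-- Zhu's product `a * b = Res_z ((1+z)^{wt a} / z) Y(a,z)b` for `a` of weight `w`. -/
def star (w : ℤ) (a b : V) : V := A.circm w 1 a b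

/-- The subspace `O(V)`, spanned by the elements `a ∘ b` with `a` homogeneous. -/
def Osub : Submodule ℂ V :=
  Submodule.span ℂ {x | ∃ (w : ℤ) (a b : V), a ∈ A.grade w ∧ x = A.circm w 2 a b}

end VOA

/-- A module over the vertex operator algebra `(V, A)` in coefficient form:
`mop n a m = a(n)m`, with the `ℤ₊`-grading `grade`. -/
structure VMod {V : Type} [AddCommGroup V] [Module ℂ V] (A : VOA V)
    (M : Type) [AddCommGroup M] [Module ℂ M] where
  mop : ℤ → V →ₗ[ℂ] M →ₗ[ℂ] M
  grade : ℕ → Submodule ℂ M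
  isInternal : DirectSum.IsInternal grade
  trunc : ∀ (a : V) (x : M), ∃ N : ℤ, ∀ n ≥ N, mop n a x = 0
  vacuum_mop : ∀ (n : ℤ) (x : M), mop n A.vacuum x = if n = -1 then x else 0
  deriv : ∀ (n : ℤ) (a : V) (x : M),
    mop n (A.op 0 A.omega a) x = (-n) • mop (n - 1) a x
  mop_grade : ∀ (p : ℤ) (q : ℕ) (n : ℤ), ∀ a ∈ A.grade p, ∀ x ∈ grade q,
    (((q : ℤ) + p - n - 1 < 0 → mop n a x = 0) ∧
     ∀ r : ℕ, (r : ℤ) = (q : ℤ) + p - n - 1 → mop n a x ∈ grade r)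
  borcherds : ∀ (m n k : ℤ) (a b : V) (x : M),
    ∑ᶠ j : ℕ, Ring.choose m j • mop (m + k - j) (A.op (n + j) a b) x =
    ∑ᶠ j : ℕ, ((-1 : ℤ) ^ j * Ring.choose n j) •
      (mop (m + n - j) a (mop (k + j) b x) -
        (if Even n then (1 : ℤ) else -1) • mop (n + k - j) b (mop (m + j) a x))

namespace VMod

variable {V : Type} [AddCommGroup V] [Module ℂ V] {A : VOA V}
variable {M : Type} [AddCommGroup M] [Module ℂ M] (S : VMod A M)

/-- `Res_z ((1+z)^w / z^m) Y_M(a,z)x`. -/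
def circm (w m : ℤ) (a : V) (x : M) : M :=
  ∑ᶠ i : ℕ, Ring.choose w i • S.mop ((i : ℤ) - m) a x

/-- The subspace `O(M)` spanned by `a ∘ x = Res_z ((1+z)^{wt a}/z²) Y_M(a,z)x`. -/
def Osub : Submodule ℂ M :=
  Submodule.span ℂ {y | ∃ (w : ℤ) (a : V) (x : M), a ∈ A.grade w ∧ y = S.circm w 2 a x}

/-- The left action of `A(V)` on `A(M)` at the level of representatives:
`a · x = Res_z ((1+z)^{wt a}/z) Y_M(a,z)x`. -/
def actL (w : ℤ) (a : V) (x : M) : M := S.circm w 1 a x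

/-- The right action of `A(V)` on `A(M)` at the level of representatives:
`x · a = Res_z ((1+z)^{wt a - 1}/z) Y_M(a,z)x`. -/
def actR (w : ℤ) (a : V) (x : M) : M :=
  ∑ᶠ i : ℕ, Ring.choose (w - 1) i • S.mop ((i : ℤ) - 1) a x

/-- A submodule invariant under all the mode operators. -/
def Invariant (p : Submodule ℂ M) : Prop := ∀ (n : ℤ) (a : V), ∀ x ∈ p, S.mop n a x ∈ p

/-- Irreducibility of a `V`-module. -/
def Irreducible : Prop :=
  (⊤ : Submodule ℂ M) ≠ ⊥ ∧ ∀ p : Submodule ℂ M, S.Invariant p → p = ⊥ ∨ p = ⊤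

/-- `L(0)` acts semisimply on `M`. -/
def L0Semisimple : Prop :=
  (⨆ μ : ℂ, Module.End.eigenspace (S.mop 1 A.omega) μ) = ⊤

/-- `M` is finitely generated over `V`. -/
def FG : Prop :=
  ∃ s : Finset M, ∀ p : Submodule ℂ M, S.Invariant p → (↑s : Set M) ⊆ p → p = ⊤

/-- An invariant submodule that is simple in the lattice of invariant submodules. -/
def SimpleSub (p : Submodule ℂ M) : Prop :=
  S.Invariant p ∧ p ≠ ⊥ ∧ ∀ q : Submodule ℂ M, S.Invariant q → q ≤ p → q = ⊥ ∨ q = p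

/-- Complete reducibility: `M` is a (direct) sum of irreducible submodules. -/
def CompletelyReducible : Prop :=
  sSup {p : Submodule ℂ M | S.SimpleSub p} = ⊤

end VMod

/-- Isomorphism of `V`-modules. -/
def VModIso {V : Type} [AddCommGroup V] [Module ℂ V] {A : VOA V}
    {M M' : Type} [AddCommGroup M] [Module ℂ M] [AddCommGroup M'] [Module ℂ M']
    (S : VMod A M) (S' : VMod A M') : Prop :=
  ∃ e : M ≃ₗ[ℂ] M', ∀ (n : ℤ) (a : V) (x : M), e (S.mop n a x) = S'.mop n a (e x)

/-- A bundled module over the vertex operator algebra `(V, A)`. -/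
structure VModBundle {V : Type} [AddCommGroup V] [Module ℂ V] (A : VOA V) where
  M : Type
  [acg : AddCommGroup M]
  [modc : Module ℂ M]
  S : VMod A M

attribute [instance] VModBundle.acg VModBundle.modc

/-- Rationality of a VOA (with the standing assumption that `L(0)` acts semisimply on
all modules considered): finitely many irreducibles, and every finitely generated module
is completely reducible. -/
def VOA.Rational {V : Type} [AddCommGroup V] [Module ℂ V] (A : VOA V) : Prop :=
  (∃ (n : ℕ) (f : Fin n → VModBundle A),
    ∀ (M : Type) [AddCommGroup M] [Module ℂ M] (S : VMod A M),
      S.Irreducible → S.L0Semisimple → ∃ i, VModIso S (f i).S) ∧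
  (∀ (M : Type) [AddCommGroup M] [Module ℂ M] (S : VMod A M),
      S.FG → S.L0Semisimple → S.CompletelyReducible)

section Tensor

variable {V₁ V₂ : Type} [AddCommGroup V₁] [Module ℂ V₁] [AddCommGroup V₂] [Module ℂ V₂]

/-- The tensor product of two submodules, as a submodule of the tensor product. -/
def tsub (p : Submodule ℂ V₁) (q : Submodule ℂ V₂) : Submodule ℂ (V₁ ⊗[ℂ] V₂) :=
  LinearMap.range (TensorProduct.map p.subtype q.subtype)

/-- `T` is the tensor product VOA structure of `A` and `B` on `V₁ ⊗[ℂ] V₂`: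
`Y(a ⊗ b, z) = Y(a,z) ⊗ Y(b,z)`, graded pieces `(V₁ ⊗ V₂)_n = ⊕_{p+q=n} (V₁)_p ⊗ (V₂)_q`,
vacuum `1 ⊗ 1` and Virasoro element `ω₁ ⊗ 1 + 1 ⊗ ω₂`. -/
def IsTensorVOA (A : VOA V₁) (B : VOA V₂) (T : VOA (V₁ ⊗[ℂ] V₂)) : Prop :=
  (∀ (n : ℤ) (a c : V₁) (b d : V₂),
      T.op n (a ⊗ₜ[ℂ] b) (c ⊗ₜ[ℂ] d) =
        ∑ᶠ i : ℤ, (A.op i a c) ⊗ₜ[ℂ] (B.op (n - 1 - i) b d)) ∧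
  (∀ n : ℤ, T.grade n = ⨆ p : ℤ, tsub (A.grade p) (B.grade (n - p))) ∧
  T.vacuum = A.vacuum ⊗ₜ[ℂ] B.vacuum ∧
  T.omega = A.omega ⊗ₜ[ℂ] B.vacuum + A.vacuum ⊗ₜ[ℂ] B.omega

variable {M₁ M₂ : Type} [AddCommGroup M₁] [Module ℂ M₁] [AddCommGroup M₂] [Module ℂ M₂]

/-- `S` is the tensor product module structure of `S₁` and `S₂` over the tensor product
VOA `T`: `Y(a ⊗ b, z) = Y(a,z) ⊗ Y(b,z)` and `(M₁ ⊗ M₂)(n) = ⊕_{p+q=n} M₁(p) ⊗ M₂(q)`. -/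
def IsTensorVMod {A : VOA V₁} {B : VOA V₂} {T : VOA (V₁ ⊗[ℂ] V₂)}
    (S₁ : VMod A M₁) (S₂ : VMod B M₂) (S : VMod T (M₁ ⊗[ℂ] M₂)) : Prop :=
  (∀ (n : ℤ) (a : V₁) (b : V₂) (x : M₁) (y : M₂),
      S.mop n (a ⊗ₜ[ℂ] b) (x ⊗ₜ[ℂ] y) =
        ∑ᶠ i : ℤ, (S₁.mop i a x) ⊗ₜ[ℂ] (S₂.mop (n - 1 - i) b y)) ∧
  (∀ n : ℕ, S.grade n = ⨆ p : ℕ, ⨆ _ : p ≤ n, tsub (S₁.grade p) (S₂.grade (n - p)))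

end Tensor

/-- An intertwining operator of type `(M³; M¹, M²)` in coefficient form:
`I(u, z)v = ∑_{α ∈ ℂ} (I α u v) z^{-α-1}`. -/
structure IsIntertwiner {V : Type} [AddCommGroup V] [Module ℂ V] (A : VOA V)
    {M1 M2 M3 : Type} [AddCommGroup M1] [Module ℂ M1] [AddCommGroup M2] [Module ℂ M2]
    [AddCommGroup M3] [Module ℂ M3]
    (S1 : VMod A M1) (S2 : VMod A M2) (S3 : VMod A M3)
    (I : ℂ → M1 →ₗ[ℂ] M2 →ₗ[ℂ] M3) : Prop where
  trunc : ∀ (α : ℂ) (u : M1) (v : M2), ∃ N : ℕ, ∀ n : ℕ, n ≥ N → I (α + n) u v = 0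
  deriv : ∀ (α : ℂ) (u : M1) (v : M2),
    I α (S1.mop 0 A.omega u) v = (-α) • I (α - 1) u v
  jacobi : ∀ (m n : ℤ) (α : ℂ) (a : V) (u : M1) (v : M2),
    ∑ᶠ j : ℕ, Ring.choose m j • I (m + α - j) (S1.mop (n + j) a u) v =
    ∑ᶠ j : ℕ, ((-1 : ℤ) ^ j * Ring.choose n j) •
      (S3.mop (m + n - j) a (I (α + j) u v) -
        (if Even n then (1 : ℤ) else -1) • I (n + α - j) u (S2.mop (m + j) a v))

/-- The fusion rule: the dimension (as a cardinal) of the space of intertwining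
operators of type `(M³; M¹, M²)`. -/
noncomputable def fusionRule {V : Type} [AddCommGroup V] [Module ℂ V] (A : VOA V)
    {M1 M2 M3 : Type} [AddCommGroup M1] [Module ℂ M1] [AddCommGroup M2] [Module ℂ M2]
    [AddCommGroup M3] [Module ℂ M3]
    (S1 : VMod A M1) (S2 : VMod A M2) (S3 : VMod A M3) : Cardinal :=
  Module.rank ℂ (Submodule.span ℂ {I : ℂ → M1 →ₗ[ℂ] M2 →ₗ[ℂ] M3 | IsIntertwiner A S1 S2 S3 I})


section ZhuHelpers

open Finset

lemma finsum_cut_nat {M : Type*} [AddCommMonoid M] (F : ℕ → M) (n : ℕ)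
    (h : ∀ i, n ≤ i → F i = 0) : ∑ᶠ i, F i = ∑ i ∈ Finset.range n, F i := by
  apply finsum_eq_sum_of_support_subset
  intro i hi
  simp only [Function.mem_support, ne_eq] at hi
  simp only [Finset.coe_range, Set.mem_Iio]
  by_contra hh
  exact hi (h i (by omega))

lemma choose_absorb (w : ℤ) (i : ℕ) :
    ((i : ℤ) + 1) * Ring.choose (w + 1) (i + 1) = (w + 1) * Ring.choose w i := by
  have h := Ring.choose_smul_choose (w + 1) (n := i + 1) (k := 1) (Nat.le_add_left 1 i)
  rw [Nat.choose_one_right, Ring.choose_one_right] at h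
  push_cast at h
  simpa [nsmul_eq_mul, add_sub_cancel_right] using h

namespace VOA

variable {V : Type} [AddCommGroup V] [Module ℂ V] (A : VOA V)

lemma exists_cut (m : ℤ) (a b : V) :
    ∃ n : ℕ, ∀ i : ℕ, n ≤ i → A.op ((i : ℤ) - m) a b = 0 := by
  obtain ⟨N, hN⟩ := A.trunc a b
  exact ⟨(N + m).toNat, fun i hi => hN _ (by omega)⟩

lemma circm_eq_sum {m w : ℤ} {a b : V} {n : ℕ}
    (hn : ∀ i : ℕ, n ≤ i → A.op ((i : ℤ) - m) a b = 0) :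
    A.circm w m a b = ∑ i ∈ Finset.range n, Ring.choose w i • A.op ((i : ℤ) - m) a b :=
  finsum_cut_nat _ n fun i hi => by rw [hn i hi, smul_zero]

lemma circm_add_right (w m : ℤ) (a b b' : V) :
    A.circm w m a (b + b') = A.circm w m a b + A.circm w m a b' := by
  obtain ⟨n₁, h₁⟩ := A.exists_cut m a b
  obtain ⟨n₂, h₂⟩ := A.exists_cut m a b'
  have h₃ : ∀ i : ℕ, n₁ + n₂ ≤ i → A.op ((i : ℤ) - m) a (b + b') = 0 := fun i hi => by
    rw [map_add, h₁ i (by omega), h₂ i (by omega), add_zero]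
  rw [A.circm_eq_sum h₃, A.circm_eq_sum (n := n₁ + n₂) (fun i hi => h₁ i (by omega)),
    A.circm_eq_sum (n := n₁ + n₂) (fun i hi => h₂ i (by omega)), ← Finset.sum_add_distrib]
  exact Finset.sum_congr rfl fun i _ => by rw [map_add, smul_add]

lemma circm_smul_right (w m : ℤ) (c : ℂ) (a b : V) :
    A.circm w m a (c • b) = c • A.circm w m a b := by
  obtain ⟨n₁, h₁⟩ := A.exists_cut m a b
  have h₂ : ∀ i : ℕ, n₁ ≤ i → A.op ((i : ℤ) - m) a (c • b) = 0 := fun i hi => by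
    rw [map_smul, h₁ i hi, smul_zero]
  rw [A.circm_eq_sum h₂, A.circm_eq_sum h₁, Finset.smul_sum]
  exact Finset.sum_congr rfl fun i _ => by rw [map_smul, smul_comm]

lemma circm_add_left (w m : ℤ) (a a' b : V) :
    A.circm w m (a + a') b = A.circm w m a b + A.circm w m a' b := by
  obtain ⟨n₁, h₁⟩ := A.exists_cut m a b
  obtain ⟨n₂, h₂⟩ := A.exists_cut m a' b
  have h₃ : ∀ i : ℕ, n₁ + n₂ ≤ i → A.op ((i : ℤ) - m) (a + a') b = 0 := fun i hi => by
    rw [map_add, LinearMap.add_apply, h₁ i (by omega), h₂ i (by omega), add_zero]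
  rw [A.circm_eq_sum h₃, A.circm_eq_sum (n := n₁ + n₂) (fun i hi => h₁ i (by omega)),
    A.circm_eq_sum (n := n₁ + n₂) (fun i hi => h₂ i (by omega)), ← Finset.sum_add_distrib]
  exact Finset.sum_congr rfl fun i _ => by rw [map_add, LinearMap.add_apply, smul_add]

lemma circm_smul_left (w m : ℤ) (c : ℂ) (a b : V) :
    A.circm w m (c • a) b = c • A.circm w m a b := by
  obtain ⟨n₁, h₁⟩ := A.exists_cut m a b
  have h₂ : ∀ i : ℕ, n₁ ≤ i → A.op ((i : ℤ) - m) (c • a) b = 0 := fun i hi => by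
    rw [map_smul, LinearMap.smul_apply, h₁ i hi, smul_zero]
  rw [A.circm_eq_sum h₂, A.circm_eq_sum h₁, Finset.smul_sum]
  exact Finset.sum_congr rfl fun i _ => by rw [map_smul, LinearMap.smul_apply, smul_comm]

lemma circm_zero_left (w m : ℤ) (b : V) : A.circm w m 0 b = 0 := by
  apply finsum_eq_zero_of_forall_eq_zero
  intro i
  rw [map_zero, LinearMap.zero_apply, smul_zero]

lemma circm_zero_right (w m : ℤ) (a : V) : A.circm w m a 0 = 0 := by
  apply finsum_eq_zero_of_forall_eq_zero
  intro i
  rw [map_zero, smul_zero]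

lemma map_circm {Z : Type*} [AddCommGroup Z] [Module ℂ Z] (π : V →ₗ[ℂ] Z)
    (w m : ℤ) (a b : V) :
    π (A.circm w m a b) = ∑ᶠ i : ℕ, Ring.choose w i • π (A.op ((i : ℤ) - m) a b) := by
  obtain ⟨n, hn⟩ := A.exists_cut m a b
  rw [A.circm_eq_sum hn, map_sum,
    finsum_cut_nat _ n (fun i hi => by rw [hn i hi, map_zero, smul_zero])]
  exact Finset.sum_congr rfl fun i _ => map_zsmul π _ _

lemma circm_pascal (w m : ℤ) (a b : V) :
    A.circm (w + 1) m a b = A.circm w m a b + A.circm w (m - 1) a b := by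
  obtain ⟨n₁, h₁⟩ := A.exists_cut m a b
  obtain ⟨n₂, h₂⟩ := A.exists_cut (m - 1) a b
  set n := n₁ + n₂ with hndef
  have cast1 : ∀ i : ℕ, ((i + 1 : ℕ) : ℤ) - m = (i : ℤ) - (m - 1) := by intro i; push_cast; ring
  rw [A.circm_eq_sum (m := m) (n := n + 1) (fun i hi => h₁ i (by omega)),
    A.circm_eq_sum (m := m) (n := n + 1) (fun i hi => h₁ i (by omega)),
    A.circm_eq_sum (m := m - 1) (n := n) (fun i hi => h₂ i (by omega))]
  rw [Finset.sum_range_succ' (fun i => Ring.choose (w + 1) i • A.op ((i : ℤ) - m) a b) n]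
  rw [Finset.sum_range_succ' (fun i => Ring.choose w i • A.op ((i : ℤ) - m) a b) n]
  have step : ∀ i : ℕ, Ring.choose (w + 1) (i + 1) • A.op (((i + 1 : ℕ) : ℤ) - m) a b
      = Ring.choose w (i + 1) • A.op (((i + 1 : ℕ) : ℤ) - m) a b
        + Ring.choose w i • A.op ((i : ℤ) - (m - 1)) a b := by
    intro i
    rw [Ring.choose_succ_succ, add_smul, cast1 i]
    abel
  rw [Finset.sum_congr rfl (fun i _ => step i), Finset.sum_add_distrib]
  rw [Ring.choose_zero_right, Ring.choose_zero_right]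
  abel

lemma circm_deriv (w m : ℤ) (a b : V) :
    A.circm (w + 1) m (A.op 0 A.omega a) b
      = m • A.circm (w + 1) (m + 1) a b - (w + 1) • A.circm w m a b := by
  obtain ⟨n₁, h₁⟩ := A.exists_cut m (A.op 0 A.omega a) b
  obtain ⟨n₂, h₂⟩ := A.exists_cut (m + 1) a b
  obtain ⟨n₃, h₃⟩ := A.exists_cut m a b
  set n := n₁ + n₂ + n₃ with hndef
  rw [A.circm_eq_sum (m := m) (n := n + 1) (fun i hi => h₁ i (by omega)),
    A.circm_eq_sum (m := m + 1) (n := n + 1) (fun i hi => h₂ i (by omega)),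
    A.circm_eq_sum (m := m) (n := n) (fun i hi => h₃ i (by omega))]
  have hterm : ∀ i : ℕ, Ring.choose (w + 1) i • A.op ((i : ℤ) - m) (A.op 0 A.omega a) b
      = (m * Ring.choose (w + 1) i) • A.op ((i : ℤ) - (m + 1)) a b
        - ((i : ℤ) * Ring.choose (w + 1) i) • A.op ((i : ℤ) - (m + 1)) a b := by
    intro i
    rw [A.deriv ((i : ℤ) - m) a b, smul_smul, ← sub_smul]
    congr 1
    · ring
    · congr 1; ring
  rw [Finset.sum_congr rfl (fun i _ => hterm i), Finset.sum_sub_distrib]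
  congr 1
  · rw [Finset.smul_sum]
    exact Finset.sum_congr rfl fun i _ => by rw [smul_smul]
  · rw [Finset.sum_range_succ'
      (fun i => ((i : ℤ) * Ring.choose (w + 1) i) • A.op ((i : ℤ) - (m + 1)) a b) n]
    have h0 : (((0 : ℕ) : ℤ) * Ring.choose (w + 1) 0) • A.op (((0 : ℕ) : ℤ) - (m + 1)) a b
        = 0 := by
      rw [Nat.cast_zero, zero_mul, zero_smul]
    rw [h0, add_zero, Finset.smul_sum]
    refine Finset.sum_congr rfl fun i _ => ?_
    have harg : ((i + 1 : ℕ) : ℤ) - (m + 1) = (i : ℤ) - m := by push_cast; ring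
    rw [harg]
    have : ((i + 1 : ℕ) : ℤ) * Ring.choose (w + 1) (i + 1) = (w + 1) * Ring.choose w i := by
      push_cast
      exact choose_absorb w i
    rw [this, mul_smul]

lemma circm_mem_Osub_aux :
    ∀ (k : ℕ) (w : ℤ) (a b : V), a ∈ A.grade w → A.circm w ((k : ℤ) + 2) a b ∈ A.Osub := by
  intro k
  induction k with
  | zero =>
    intro w a b ha
    refine Submodule.subset_span ⟨w, a, b, ha, ?_⟩
    norm_num
  | succ k ih =>
    intro w a b ha
    set m : ℤ := (k : ℤ) + 2 with hmdef
    have harg : ((k + 1 : ℕ) : ℤ) + 2 = m + 1 := by rw [hmdef]; push_cast; ring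
    rw [harg]
    have key : m • A.circm w (m + 1) a b
        = A.circm (w + 1) m (A.op 0 A.omega a) b + (w + 1) • A.circm w m a b
          - m • A.circm w m a b := by
      have h1 := A.circm_deriv w m a b
      have h2 := A.circm_pascal w (m + 1) a b
      rw [show m + 1 - 1 = m by ring] at h2
      rw [h2, smul_add] at h1
      rw [h1]
      abel
    have hmem : m • A.circm w (m + 1) a b ∈ A.Osub := by
      rw [key]
      refine Submodule.sub_mem _ (Submodule.add_mem _ ?_ ?_) ?_
      · exact ih (w + 1) _ b (A.L_neg_one_grade w a ha)
      · rw [← Int.cast_smul_eq_zsmul ℂ]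
        exact Submodule.smul_mem _ _ (ih w a b ha)
      · rw [← Int.cast_smul_eq_zsmul ℂ]
        exact Submodule.smul_mem _ _ (ih w a b ha)
    have hexp : A.circm w (m + 1) a b = ((m : ℂ)⁻¹) • (m • A.circm w (m + 1) a b) := by
      rw [← Int.cast_smul_eq_zsmul ℂ, smul_smul,
        inv_mul_cancel₀ (by exact_mod_cast (by omega : m ≠ 0)), one_smul]
    rw [hexp]
    exact Submodule.smul_mem _ _ hmem

lemma circm_mem_Osub (m : ℤ) (hm : 2 ≤ m) (w : ℤ) (a b : V) (ha : a ∈ A.grade w) :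
    A.circm w m a b ∈ A.Osub := by
  have : m = ((m - 2).toNat : ℤ) + 2 := by omega
  rw [this]
  exact A.circm_mem_Osub_aux _ w a b ha

end VOA

end ZhuHelpers


section CoreRearrange
open Finset
open scoped TensorProduct

lemma square_vandermonde {M : Type*} [AddCommGroup M] (p q : ℤ) (I : ℕ) (u : ℕ → M)
    (hu : ∀ i, I ≤ i → u i = 0) :
    ∑ i ∈ range I, Ring.choose (p + q) i • u i =
      ∑ i₁ ∈ range I, ∑ i₂ ∈ range I, (Ring.choose p i₁ * Ring.choose q i₂) • u (i₁ + i₂) := by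
  rw [← Finset.sum_product']
  have h0 : ∀ z ∈ (range I ×ˢ range I), (Ring.choose p z.1 * Ring.choose q z.2) • u (z.1 + z.2) ≠ 0
      → (fun z : ℕ × ℕ => z.1 + z.2 < I) z := by
    intro z _ hz
    by_contra h
    exact hz (by rw [hu _ (by omega), smul_zero])
  rw [← Finset.sum_filter_of_ne h0]
  have hset : (range I ×ˢ range I).filter (fun z : ℕ × ℕ => z.1 + z.2 < I) =
      (range I).biUnion (fun i => Finset.HasAntidiagonal.antidiagonal i) := by
    ext ⟨a, b⟩
    simp only [Finset.mem_filter, Finset.mem_product, Finset.mem_range, Finset.mem_biUnion,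
      Finset.HasAntidiagonal.mem_antidiagonal]
    constructor
    · rintro ⟨⟨_, _⟩, h⟩; exact ⟨a + b, h, rfl⟩
    · rintro ⟨i, hi, rfl⟩; omega
  rw [hset, Finset.sum_biUnion]
  · refine Finset.sum_congr rfl fun i _ => ?_
    have : ∀ z ∈ Finset.HasAntidiagonal.antidiagonal i,
        (Ring.choose p z.1 * Ring.choose q z.2) • u (z.1 + z.2)
          = (Ring.choose p z.1 * Ring.choose q z.2) • u i := by
      intro z hz; rw [Finset.HasAntidiagonal.mem_antidiagonal.mp hz]
    rw [Finset.sum_congr rfl this, ← Finset.sum_smul,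
      ← Ring.add_choose_eq i (Commute.all p q)]
  · intro s _ t _ hst
    refine Finset.disjoint_left.mpr fun z hz hz' => hst ?_
    rw [← Finset.HasAntidiagonal.mem_antidiagonal.mp hz, ← Finset.HasAntidiagonal.mem_antidiagonal.mp hz']

variable {Z₁ Z₂ : Type*} [AddCommGroup Z₁] [Module ℂ Z₁] [AddCommGroup Z₂] [Module ℂ Z₂]

lemma core_rearrange (f : ℤ → Z₁) (g : ℤ → Z₂) (Nf Ng : ℤ)
    (hf : ∀ j, Nf ≤ j → f j = 0) (hg : ∀ j, Ng ≤ j → g j = 0) (p q m : ℤ) :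
    (∑ᶠ i : ℕ, Ring.choose (p + q) i • (∑ᶠ j : ℤ, f j ⊗ₜ[ℂ] g ((i : ℤ) - m - 1 - j)))
      = ∑ᶠ x : ℤ, (∑ᶠ i : ℕ, Ring.choose p i • f ((i : ℤ) - x)) ⊗ₜ[ℂ]
          (∑ᶠ i : ℕ, Ring.choose q i • g ((i : ℤ) - (m + 1 - x))) := by
  set I : ℕ := (Nf + Ng + m + 1).toNat with hIdef
  have hI : Nf + Ng + m + 1 ≤ (I : ℤ) := by rw [hIdef]; omega
  set K : ℤ := (I : ℤ) + (Nf.natAbs : ℤ) + (Ng.natAbs : ℤ) + (m.natAbs : ℤ) + 1 with hKdef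
  have hKNf : Nf ≤ K := by omega
  have hKNg : Ng ≤ K := by omega
  have hKm : m.natAbs ≤ K := by omega
  have hKI : (I : ℤ) ≤ K := by omega
  set W : Finset ℤ := Finset.Icc (-K) K with hWdef
  -- the inner convolution vanishes for large i
  have hD : ∀ i : ℕ, (I : ℤ) ≤ (i : ℤ) →
      (∑ᶠ j : ℤ, f j ⊗ₜ[ℂ] g ((i : ℤ) - m - 1 - j)) = 0 := by
    intro i hi
    apply finsum_eq_zero_of_forall_eq_zero
    intro j
    by_cases hj : Nf ≤ j
    · rw [hf j hj, TensorProduct.zero_tmul]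
    · rw [hg _ (by omega), TensorProduct.tmul_zero]
  -- common middle expression
  have middle : ∀ (i₁ i₂ : ℕ), i₁ < I → i₂ < I →
      (Ring.choose p i₁ * Ring.choose q i₂) •
        (∑ᶠ j : ℤ, f j ⊗ₜ[ℂ] g ((((i₁ + i₂ : ℕ)) : ℤ) - m - 1 - j)) =
      ∑ x ∈ W, (Ring.choose p i₁ * Ring.choose q i₂) •
        (f ((i₁ : ℤ) - x) ⊗ₜ[ℂ] g ((i₂ : ℤ) - (m + 1 - x))) := by
    intro i₁ i₂ hi₁ hi₂
    have h1 : (∑ᶠ j : ℤ, f j ⊗ₜ[ℂ] g ((((i₁ + i₂ : ℕ)) : ℤ) - m - 1 - j)) =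
        ∑ᶠ x : ℤ, f ((i₁ : ℤ) - x) ⊗ₜ[ℂ] g ((i₂ : ℤ) - (m + 1 - x)) := by
      rw [← finsum_comp_equiv (Equiv.subLeft (i₁ : ℤ))]
      apply finsum_congr
      intro x
      have : (((i₁ + i₂ : ℕ)) : ℤ) - m - 1 - (Equiv.subLeft (i₁ : ℤ) x) =
          (i₂ : ℤ) - (m + 1 - x) := by
        simp [Equiv.subLeft]; push_cast; ring
      rw [this]; rfl
    rw [h1]
    have hsupp : (Function.support fun x : ℤ =>
        f ((i₁ : ℤ) - x) ⊗ₜ[ℂ] g ((i₂ : ℤ) - (m + 1 - x))) ⊆ (W : Set ℤ) := by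
      intro x hx
      simp only [Function.mem_support, ne_eq] at hx
      have hfx : ¬ Nf ≤ (i₁ : ℤ) - x := fun h => hx (by rw [hf _ h, TensorProduct.zero_tmul])
      have hgx : ¬ Ng ≤ (i₂ : ℤ) - (m + 1 - x) :=
        fun h => hx (by rw [hg _ h, TensorProduct.tmul_zero])
      simp only [hWdef, Finset.coe_Icc, Set.mem_Icc]
      omega
    rw [finsum_eq_sum_of_support_subset _ hsupp, Finset.smul_sum]
  -- LHS to double range sum
  have hL : (∑ᶠ i : ℕ, Ring.choose (p + q) i • (∑ᶠ j : ℤ, f j ⊗ₜ[ℂ] g ((i : ℤ) - m - 1 - j)))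
      = ∑ i₁ ∈ range I, ∑ i₂ ∈ range I, ∑ x ∈ W,
          (Ring.choose p i₁ * Ring.choose q i₂) •
            (f ((i₁ : ℤ) - x) ⊗ₜ[ℂ] g ((i₂ : ℤ) - (m + 1 - x))) := by
    have hsupp : (Function.support fun i : ℕ =>
        Ring.choose (p + q) i • (∑ᶠ j : ℤ, f j ⊗ₜ[ℂ] g ((i : ℤ) - m - 1 - j)))
          ⊆ ((range I : Finset ℕ) : Set ℕ) := by
      intro i hi
      simp only [Function.mem_support, ne_eq] at hi
      simp only [Finset.coe_range, Set.mem_Iio]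
      by_contra h
      exact hi (by rw [hD i (by omega), smul_zero])
    rw [finsum_eq_sum_of_support_subset _ hsupp,
      square_vandermonde p q I _ (fun i hi => hD i (by omega))]
    exact Finset.sum_congr rfl fun i₁ h₁ => Finset.sum_congr rfl fun i₂ h₂ =>
      middle i₁ i₂ (Finset.mem_range.mp h₁) (Finset.mem_range.mp h₂)
  rw [hL]
  -- RHS to triple sum
  have hR : (∑ᶠ x : ℤ, (∑ᶠ i : ℕ, Ring.choose p i • f ((i : ℤ) - x)) ⊗ₜ[ℂ]
          (∑ᶠ i : ℕ, Ring.choose q i • g ((i : ℤ) - (m + 1 - x))))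
      = ∑ x ∈ W, ∑ i₁ ∈ range I, ∑ i₂ ∈ range I,
          (Ring.choose p i₁ * Ring.choose q i₂) •
            (f ((i₁ : ℤ) - x) ⊗ₜ[ℂ] g ((i₂ : ℤ) - (m + 1 - x))) := by
    have hFzero : ∀ x : ℤ, x ≤ -Nf → ∀ i : ℕ, Ring.choose p i • f ((i : ℤ) - x) = 0 := by
      intro x hx i; rw [hf _ (by omega), smul_zero]
    have hGzero : ∀ x : ℤ, m + Ng + 1 ≤ x → ∀ i : ℕ,
        Ring.choose q i • g ((i : ℤ) - (m + 1 - x)) = 0 := by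
      intro x hx i; rw [hg _ (by omega), smul_zero]
    have hsupp : (Function.support fun x : ℤ =>
        (∑ᶠ i : ℕ, Ring.choose p i • f ((i : ℤ) - x)) ⊗ₜ[ℂ]
          (∑ᶠ i : ℕ, Ring.choose q i • g ((i : ℤ) - (m + 1 - x)))) ⊆ (W : Set ℤ) := by
      intro x hx
      simp only [Function.mem_support, ne_eq] at hx
      simp only [hWdef, Finset.coe_Icc, Set.mem_Icc]
      by_contra h
      rw [not_and_or, not_le, not_le] at h
      rcases h with h | h
      · exact hx (by rw [finsum_eq_zero_of_forall_eq_zero (hFzero x (by omega)),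
          TensorProduct.zero_tmul])
      · exact hx (by rw [finsum_eq_zero_of_forall_eq_zero (hGzero x (by omega)),
          TensorProduct.tmul_zero])
    rw [finsum_eq_sum_of_support_subset _ hsupp]
    refine Finset.sum_congr rfl fun x hx => ?_
    -- three cases on x
    rcases le_or_gt x (-Nf) with hcase | hcase
    · rw [finsum_eq_zero_of_forall_eq_zero (hFzero x hcase), TensorProduct.zero_tmul]
      symm
      apply Finset.sum_eq_zero; intro i₁ _
      apply Finset.sum_eq_zero; intro i₂ _
      rw [hf ((i₁ : ℤ) - x) (by omega), TensorProduct.zero_tmul, smul_zero]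
    rcases le_or_gt (m + Ng + 1) x with hcase2 | hcase2
    · rw [finsum_eq_zero_of_forall_eq_zero (hGzero x hcase2), TensorProduct.tmul_zero]
      symm
      apply Finset.sum_eq_zero; intro i₁ _
      apply Finset.sum_eq_zero; intro i₂ _
      rw [hg ((i₂ : ℤ) - (m + 1 - x)) (by omega), TensorProduct.tmul_zero, smul_zero]
    -- main case: 1 - Nf ≤ x ≤ m + Ng
    have hF : (∑ᶠ i : ℕ, Ring.choose p i • f ((i : ℤ) - x)) =
        ∑ i₁ ∈ range I, Ring.choose p i₁ • f ((i₁ : ℤ) - x) := by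
      apply finsum_eq_sum_of_support_subset
      intro i hi
      simp only [Function.mem_support, ne_eq] at hi
      simp only [Finset.coe_range, Set.mem_Iio]
      by_contra h
      exact hi (by rw [hf _ (by omega), smul_zero])
    have hG : (∑ᶠ i : ℕ, Ring.choose q i • g ((i : ℤ) - (m + 1 - x))) =
        ∑ i₂ ∈ range I, Ring.choose q i₂ • g ((i₂ : ℤ) - (m + 1 - x)) := by
      apply finsum_eq_sum_of_support_subset
      intro i hi
      simp only [Function.mem_support, ne_eq] at hi
      simp only [Finset.coe_range, Set.mem_Iio]
      by_contra h
      exact hi (by rw [hg _ (by omega), smul_zero])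
    rw [hF, hG, TensorProduct.sum_tmul]
    refine Finset.sum_congr rfl fun i₁ _ => ?_
    rw [TensorProduct.tmul_sum]
    refine Finset.sum_congr rfl fun i₂ _ => ?_
    rw [TensorProduct.tmul_smul, TensorProduct.smul_tmul', TensorProduct.smul_tmul', smul_smul,
      mul_comm (Ring.choose q i₂) (Ring.choose p i₁)]
  rw [hR]
  -- exchange the order of summation
  refine Eq.trans (Finset.sum_congr rfl fun i₁ _ => Finset.sum_comm) ?_
  exact Finset.sum_comm

end CoreRearrange

section TensorKey
open scoped TensorProduct

variable {V₁ V₂ : Type} [AddCommGroup V₁] [Module ℂ V₁] [AddCommGroup V₂] [Module ℂ V₂]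
variable {ZA ZB : Type} [AddCommGroup ZA] [Module ℂ ZA] [AddCommGroup ZB] [Module ℂ ZB]
variable {A : VOA V₁} {B : VOA V₂} {T : VOA (V₁ ⊗[ℂ] V₂)}

lemma map_T_op (hT : IsTensorVOA A B T) (πA : V₁ →ₗ[ℂ] ZA) (πB : V₂ →ₗ[ℂ] ZB)
    (n : ℤ) (a c : V₁) (b d : V₂) :
    TensorProduct.map πA πB (T.op n (a ⊗ₜ[ℂ] b) (c ⊗ₜ[ℂ] d))
      = ∑ᶠ j : ℤ, πA (A.op j a c) ⊗ₜ[ℂ] πB (B.op (n - 1 - j) b d) := by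
  rw [hT.1]
  obtain ⟨N₁, h₁⟩ := A.trunc a c
  obtain ⟨N₂, h₂⟩ := B.trunc b d
  have hfin : (Function.support fun j : ℤ =>
      (A.op j a c) ⊗ₜ[ℂ] (B.op (n - 1 - j) b d)).Finite := by
    apply Set.Finite.subset (Set.finite_Icc (n - 1 - N₂) N₁)
    intro j hj
    simp only [Function.mem_support, ne_eq] at hj
    have hA : ¬ N₁ ≤ j := fun h => hj (by rw [h₁ j h, TensorProduct.zero_tmul])
    have hB : ¬ N₂ ≤ n - 1 - j := fun h => hj (by rw [h₂ _ h, TensorProduct.tmul_zero])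
    simp only [Set.mem_Icc]
    omega
  refine Eq.trans (AddMonoidHom.map_finsum (TensorProduct.map πA πB).toAddMonoidHom hfin) ?_
  exact finsum_congr fun j => by
    rw [LinearMap.toAddMonoidHom_coe, TensorProduct.map_tmul]

lemma key_shape (hT : IsTensorVOA A B T) (πA : V₁ →ₗ[ℂ] ZA) (πB : V₂ →ₗ[ℂ] ZB)
    (p q m : ℤ) (a c : V₁) (b d : V₂) :
    TensorProduct.map πA πB (T.circm (p + q) m (a ⊗ₜ[ℂ] b) (c ⊗ₜ[ℂ] d))
      = ∑ᶠ x : ℤ, πA (A.circm p x a c) ⊗ₜ[ℂ] πB (B.circm q (m + 1 - x) b d) := by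
  rw [T.map_circm (TensorProduct.map πA πB)]
  have step1 : ∀ i : ℕ,
      Ring.choose (p + q) i • TensorProduct.map πA πB
        (T.op ((i : ℤ) - m) (a ⊗ₜ[ℂ] b) (c ⊗ₜ[ℂ] d))
      = Ring.choose (p + q) i •
          (∑ᶠ j : ℤ, πA (A.op j a c) ⊗ₜ[ℂ] πB (B.op ((i : ℤ) - m - 1 - j) b d)) := by
    intro i
    rw [map_T_op hT πA πB]
  rw [finsum_congr step1]
  obtain ⟨N₁, h₁⟩ := A.trunc a c
  obtain ⟨N₂, h₂⟩ := B.trunc b d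
  rw [core_rearrange (fun j => πA (A.op j a c)) (fun j => πB (B.op j b d)) N₁ N₂
    (fun j hj => by show πA (A.op j a c) = 0; rw [h₁ j hj, map_zero])
    (fun j hj => by show πB (B.op j b d) = 0; rw [h₂ j hj, map_zero]) p q m]
  exact finsum_congr fun x => by
    rw [A.map_circm πA p x a c, B.map_circm πB q (m + 1 - x) b d]

lemma keyO (hT : IsTensorVOA A B T) (πA : V₁ →ₗ[ℂ] ZA) (πB : V₂ →ₗ[ℂ] ZB)
    (hA₂ : LinearMap.ker πA = A.Osub) (hB₂ : LinearMap.ker πB = B.Osub)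
    (p q : ℤ) (a c : V₁) (b d : V₂) (ha : a ∈ A.grade p) (hb : b ∈ B.grade q) :
    TensorProduct.map πA πB (T.circm (p + q) 2 (a ⊗ₜ[ℂ] b) (c ⊗ₜ[ℂ] d)) = 0 := by
  rw [key_shape hT πA πB p q 2 a c b d]
  apply finsum_eq_zero_of_forall_eq_zero
  intro x
  rcases le_or_gt 2 x with hx | hx
  · have : πA (A.circm p x a c) = 0 := by
      rw [← LinearMap.mem_ker, hA₂]
      exact A.circm_mem_Osub x hx p a c ha
    rw [this, TensorProduct.zero_tmul]
  · have : πB (B.circm q (2 + 1 - x) b d) = 0 := by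
      rw [← LinearMap.mem_ker, hB₂]
      exact B.circm_mem_Osub _ (by omega) q b d hb
    rw [this, TensorProduct.tmul_zero]

lemma keyStar (hT : IsTensorVOA A B T) (πA : V₁ →ₗ[ℂ] ZA) (πB : V₂ →ₗ[ℂ] ZB)
    (hA₂ : LinearMap.ker πA = A.Osub) (hB₂ : LinearMap.ker πB = B.Osub)
    (p q : ℤ) (a c : V₁) (b d : V₂) (ha : a ∈ A.grade p) (hb : b ∈ B.grade q) :
    TensorProduct.map πA πB (T.star (p + q) (a ⊗ₜ[ℂ] b) (c ⊗ₜ[ℂ] d))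
      = πA (A.star p a c) ⊗ₜ[ℂ] πB (B.star q b d) := by
  have : T.star (p + q) (a ⊗ₜ[ℂ] b) (c ⊗ₜ[ℂ] d)
      = T.circm (p + q) 1 (a ⊗ₜ[ℂ] b) (c ⊗ₜ[ℂ] d) := rfl
  rw [this, key_shape hT πA πB p q 1 a c b d]
  have hsingle : ∀ x : ℤ, x ≠ 1 →
      πA (A.circm p x a c) ⊗ₜ[ℂ] πB (B.circm q (1 + 1 - x) b d) = 0 := by
    intro x hx
    rcases le_or_gt 2 x with h | h
    · have : πA (A.circm p x a c) = 0 := by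
        rw [← LinearMap.mem_ker, hA₂]
        exact A.circm_mem_Osub x h p a c ha
      rw [this, TensorProduct.zero_tmul]
    · have : πB (B.circm q (1 + 1 - x) b d) = 0 := by
        rw [← LinearMap.mem_ker, hB₂]
        exact B.circm_mem_Osub _ (by omega) q b d hb
      rw [this, TensorProduct.tmul_zero]
  rw [finsum_eq_single _ 1 hsingle]
  norm_num
  rfl

end TensorKey


section Assembly
open scoped TensorProduct

variable {V₁ V₂ : Type} [AddCommGroup V₁] [Module ℂ V₁] [AddCommGroup V₂] [Module ℂ V₂]
variable {A : VOA V₁} {B : VOA V₂} {T : VOA (V₁ ⊗[ℂ] V₂)}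

lemma grade_le_span (hT : IsTensorVOA A B T) (w : ℤ) :
    T.grade w ≤ Submodule.span ℂ
      {x : V₁ ⊗[ℂ] V₂ | ∃ (p : ℤ) (a : V₁) (b : V₂),
        a ∈ A.grade p ∧ b ∈ B.grade (w - p) ∧ x = a ⊗ₜ[ℂ] b} := by
  rw [hT.2.1]
  apply iSup_le
  intro p
  rw [tsub, TensorProduct.range_map_eq_span_tmul]
  apply Submodule.span_le.mpr
  rintro x ⟨m, n, rfl⟩
  exact Submodule.subset_span ⟨p, m, n, m.2, n.2, rfl⟩

lemma vac_tmul_mem_grade (hT : IsTensorVOA A B T) (q : ℤ) {b : V₂} (hb : b ∈ B.grade q) :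
    A.vacuum ⊗ₜ[ℂ] b ∈ T.grade q := by
  rw [hT.2.1]
  apply Submodule.mem_iSup_of_mem 0
  exact ⟨(⟨A.vacuum, A.vacuum_grade⟩ : A.grade 0) ⊗ₜ[ℂ] (⟨b, by simpa using hb⟩ : B.grade (q - 0)),
    by simp⟩

lemma tmul_vac_mem_grade (hT : IsTensorVOA A B T) (p : ℤ) {a : V₁} (ha : a ∈ A.grade p) :
    a ⊗ₜ[ℂ] B.vacuum ∈ T.grade p := by
  rw [hT.2.1]
  apply Submodule.mem_iSup_of_mem p
  exact ⟨(⟨a, ha⟩ : A.grade p) ⊗ₜ[ℂ] (⟨B.vacuum, by simpa using B.vacuum_grade⟩ : B.grade (p - p)),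
    by simp⟩

lemma circm_tmul_vac (hT : IsTensorVOA A B T) (p : ℤ) (a c : V₁) (d : V₂) :
    T.circm p 2 (a ⊗ₜ[ℂ] B.vacuum) (c ⊗ₜ[ℂ] d) = (A.circm p 2 a c) ⊗ₜ[ℂ] d := by
  have hop : ∀ n : ℤ, T.op n (a ⊗ₜ[ℂ] B.vacuum) (c ⊗ₜ[ℂ] d) = (A.op n a c) ⊗ₜ[ℂ] d := by
    intro n
    rw [hT.1]
    have hz : ∀ j : ℤ, j ≠ n → (A.op j a c) ⊗ₜ[ℂ] (B.op (n - 1 - j) B.vacuum d) = 0 := by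
      intro j hj
      rw [B.vacuum_op, if_neg (by omega), TensorProduct.tmul_zero]
    rw [finsum_eq_single _ n hz, B.vacuum_op, if_pos (by ring)]
  have hmain := A.map_circm ((TensorProduct.mk ℂ V₁ V₂).flip d) p 2 a c
  rw [VOA.circm, finsum_congr (fun i : ℕ => by rw [hop ((i : ℤ) - 2)])]
  exact hmain.symm

lemma circm_vac_tmul (hT : IsTensorVOA A B T) (q : ℤ) (b d : V₂) (c : V₁) :
    T.circm q 2 (A.vacuum ⊗ₜ[ℂ] b) (c ⊗ₜ[ℂ] d) = c ⊗ₜ[ℂ] (B.circm q 2 b d) := by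
  have hop : ∀ n : ℤ, T.op n (A.vacuum ⊗ₜ[ℂ] b) (c ⊗ₜ[ℂ] d) = c ⊗ₜ[ℂ] (B.op n b d) := by
    intro n
    rw [hT.1]
    have hz : ∀ j : ℤ, j ≠ -1 → (A.op j A.vacuum c) ⊗ₜ[ℂ] (B.op (n - 1 - j) b d) = 0 := by
      intro j hj
      rw [A.vacuum_op, if_neg hj, TensorProduct.zero_tmul]
    rw [finsum_eq_single _ (-1) hz, A.vacuum_op, if_pos rfl,
      show n - 1 - (-1) = n by ring]
  have hmain := B.map_circm (TensorProduct.mk ℂ V₁ V₂ c) q 2 b d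
  rw [VOA.circm, finsum_congr (fun i : ℕ => by rw [hop ((i : ℤ) - 2)])]
  exact hmain.symm


lemma tmul_osub_mem (hT : IsTensorVOA A B T) (c : V₁) {z : V₂} (hz : z ∈ B.Osub) :
    c ⊗ₜ[ℂ] z ∈ T.Osub := by
  induction hz using Submodule.span_induction with
  | mem z hz =>
    obtain ⟨q, b, d, hb, rfl⟩ := hz
    rw [← circm_vac_tmul hT q b d c]
    exact Submodule.subset_span
      ⟨q, A.vacuum ⊗ₜ[ℂ] b, c ⊗ₜ[ℂ] d, vac_tmul_mem_grade hT q hb, rfl⟩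
  | zero => simp
  | add z₁ z₂ hz₁ hz₂ ih₁ ih₂ =>
    rw [TensorProduct.tmul_add]
    exact Submodule.add_mem _ ih₁ ih₂
  | smul r z hz ih =>
    rw [TensorProduct.tmul_smul]
    exact Submodule.smul_mem _ _ ih

lemma osub_tmul_mem (hT : IsTensorVOA A B T) (d : V₂) {z : V₁} (hz : z ∈ A.Osub) :
    z ⊗ₜ[ℂ] d ∈ T.Osub := by
  induction hz using Submodule.span_induction with
  | mem z hz =>
    obtain ⟨p, a, c, ha, rfl⟩ := hz
    rw [← circm_tmul_vac hT p a c d]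
    exact Submodule.subset_span
      ⟨p, a ⊗ₜ[ℂ] B.vacuum, c ⊗ₜ[ℂ] d, tmul_vac_mem_grade hT p ha, rfl⟩
  | zero => simp
  | add z₁ z₂ hz₁ hz₂ ih₁ ih₂ =>
    rw [TensorProduct.add_tmul]
    exact Submodule.add_mem _ ih₁ ih₂
  | smul r z hz ih =>
    rw [← TensorProduct.smul_tmul']
    exact Submodule.smul_mem _ _ ih

section WithMaps

variable {ZA ZB : Type} [Ring ZA] [Algebra ℂ ZA] [Ring ZB] [Algebra ℂ ZB]

lemma Osub_le_ker (hT : IsTensorVOA A B T) (πA : V₁ →ₗ[ℂ] ZA) (πB : V₂ →ₗ[ℂ] ZB)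
    (hA₂ : LinearMap.ker πA = A.Osub) (hB₂ : LinearMap.ker πB = B.Osub) :
    T.Osub ≤ LinearMap.ker (TensorProduct.map πA πB) := by
  apply Submodule.span_le.mpr
  rintro x ⟨w, u, v, hu, rfl⟩
  simp only [SetLike.mem_coe, LinearMap.mem_ker]
  have hu' : u ∈ Submodule.span ℂ
      {x : V₁ ⊗[ℂ] V₂ | ∃ (p : ℤ) (a : V₁) (b : V₂),
        a ∈ A.grade p ∧ b ∈ B.grade (w - p) ∧ x = a ⊗ₜ[ℂ] b} := grade_le_span hT w hu
  clear hu
  induction hu' using Submodule.span_induction with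
  | mem z hz =>
    obtain ⟨p, a, b, ha, hb, rfl⟩ := hz
    induction v using TensorProduct.induction_on with
    | zero => rw [T.circm_zero_right, map_zero]
    | tmul c d =>
      have h := keyO hT πA πB hA₂ hB₂ p (w - p) a c b d ha hb
      rwa [show p + (w - p) = w by ring] at h
    | add v₁ v₂ h₁ h₂ => rw [T.circm_add_right, map_add, h₁, h₂, add_zero]
  | zero => rw [T.circm_zero_left, map_zero]
  | add u₁ u₂ hu₁ hu₂ h₁ h₂ => rw [T.circm_add_left, map_add, h₁, h₂, add_zero]
  | smul c u hu h => rw [T.circm_smul_left, map_smul, h, smul_zero]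

lemma map_star_mul (hT : IsTensorVOA A B T) (πA : V₁ →ₗ[ℂ] ZA) (πB : V₂ →ₗ[ℂ] ZB)
    (hA₂ : LinearMap.ker πA = A.Osub) (hB₂ : LinearMap.ker πB = B.Osub)
    (hA₄ : ∀ w : ℤ, ∀ a ∈ A.grade w, ∀ b : V₁, πA (A.star w a b) = πA a * πA b)
    (hB₄ : ∀ w : ℤ, ∀ a ∈ B.grade w, ∀ b : V₂, πB (B.star w a b) = πB a * πB b)
    (w : ℤ) (u v : V₁ ⊗[ℂ] V₂) (hu : u ∈ T.grade w) :
    TensorProduct.map πA πB (T.star w u v)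
      = TensorProduct.map πA πB u * TensorProduct.map πA πB v := by
  have hu' : u ∈ Submodule.span ℂ
      {x : V₁ ⊗[ℂ] V₂ | ∃ (p : ℤ) (a : V₁) (b : V₂),
        a ∈ A.grade p ∧ b ∈ B.grade (w - p) ∧ x = a ⊗ₜ[ℂ] b} := grade_le_span hT w hu
  clear hu
  simp only [VOA.star] at *
  induction hu' using Submodule.span_induction with
  | mem z hz =>
    obtain ⟨p, a, b, ha, hb, rfl⟩ := hz
    induction v using TensorProduct.induction_on with
    | zero => simp [T.circm_zero_right]
    | tmul c d =>
      have h := keyStar hT πA πB hA₂ hB₂ p (w - p) a c b d ha hb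
      rw [show p + (w - p) = w by ring] at h
      rw [VOA.star, VOA.star, VOA.star] at h
      rw [h, hA₄ p a ha c, hB₄ (w - p) b hb d, TensorProduct.map_tmul,
        TensorProduct.map_tmul, Algebra.TensorProduct.tmul_mul_tmul]
    | add v₁ v₂ h₁ h₂ => rw [T.circm_add_right, map_add, h₁, h₂, map_add, mul_add]
  | zero => simp [T.circm_zero_left]
  | add u₁ u₂ hu₁ hu₂ h₁ h₂ => rw [T.circm_add_left, map_add, h₁, h₂, map_add, add_mul]
  | smul c u hu h => rw [T.circm_smul_left, map_smul, h, map_smul, smul_mul_assoc]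

end WithMaps

end Assembly


/-- the map `[a ⊗ b] ↦ [a] ⊗ [b]` is a well-defined isomorphism of unital
associative algebras `A(V₁ ⊗ V₂) ≅ A(V₁) ⊗ A(V₂)`.  Here the Zhu algebras are presented
as arbitrary associative unital `ℂ`-algebras `ZA`, `ZB`, `ZT` realizing the quotients
`V/O(V)` with multiplication induced by Zhu's `*`-product. -/
theorem zhu_algebra_tensor_iso {V₁ V₂ : Type} [AddCommGroup V₁] [Module ℂ V₁]
    [AddCommGroup V₂] [Module ℂ V₂] (A : VOA V₁) (B : VOA V₂)
    (T : VOA (V₁ ⊗[ℂ] V₂)) (hT : IsTensorVOA A B T)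
    (ZA ZB ZT : Type) [Ring ZA] [Algebra ℂ ZA] [Ring ZB] [Algebra ℂ ZB]
    [Ring ZT] [Algebra ℂ ZT]
    (πA : V₁ →ₗ[ℂ] ZA) (πB : V₂ →ₗ[ℂ] ZB) (πT : (V₁ ⊗[ℂ] V₂) →ₗ[ℂ] ZT)
    (hA₁ : Function.Surjective πA) (hA₂ : LinearMap.ker πA = A.Osub)
    (hA₃ : πA A.vacuum = 1)
    (hA₄ : ∀ w : ℤ, ∀ a ∈ A.grade w, ∀ b : V₁, πA (A.star w a b) = πA a * πA b)
    (hB₁ : Function.Surjective πB) (hB₂ : LinearMap.ker πB = B.Osub)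
    (hB₃ : πB B.vacuum = 1)
    (hB₄ : ∀ w : ℤ, ∀ a ∈ B.grade w, ∀ b : V₂, πB (B.star w a b) = πB a * πB b)
    (hT₁ : Function.Surjective πT) (hT₂ : LinearMap.ker πT = T.Osub)
    (hT₃ : πT T.vacuum = 1)
    (hT₄ : ∀ w : ℤ, ∀ a ∈ T.grade w, ∀ b : V₁ ⊗[ℂ] V₂,
      πT (T.star w a b) = πT a * πT b) :
    ∃ F : ZT ≃ₐ[ℂ] ZA ⊗[ℂ] ZB,
      ∀ (a : V₁) (b : V₂), F (πT (a ⊗ₜ[ℂ] b)) = πA a ⊗ₜ[ℂ] πB b := by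
  classical
  set L : (V₁ ⊗[ℂ] V₂) →ₗ[ℂ] ZA ⊗[ℂ] ZB := TensorProduct.map πA πB with hLdef
  have Lsurj : Function.Surjective L := TensorProduct.map_surjective hA₁ hB₁
  have hker : LinearMap.ker L = LinearMap.ker πT := by
    apply le_antisymm
    · rw [hLdef, TensorProduct.map_ker (LinearMap.exact_subtype_ker_map πA) hA₁
        (LinearMap.exact_subtype_ker_map πB) hB₁, hT₂]
      apply sup_le
      · rintro x ⟨t, rfl⟩
        induction t using TensorProduct.induction_on with
        | zero => simp
        | tmul c y =>
          rw [LinearMap.lTensor_tmul]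
          exact tmul_osub_mem hT c (hB₂ ▸ y.2)
        | add t₁ t₂ ih₁ ih₂ =>
          rw [map_add]
          exact Submodule.add_mem _ ih₁ ih₂
      · rintro x ⟨t, rfl⟩
        induction t using TensorProduct.induction_on with
        | zero => simp
        | tmul y d =>
          rw [LinearMap.rTensor_tmul]
          exact osub_tmul_mem hT d (hA₂ ▸ y.2)
        | add t₁ t₂ ih₁ ih₂ =>
          rw [map_add]
          exact Submodule.add_mem _ ih₁ ih₂
    · rw [hT₂]
      exact Osub_le_ker hT πA πB hA₂ hB₂
  let e1 := πT.quotKerEquivOfSurjective hT₁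
  let e2 := L.quotKerEquivOfSurjective Lsurj
  let F0 : ZT ≃ₗ[ℂ] ZA ⊗[ℂ] ZB :=
    e1.symm.trans ((Submodule.quotEquivOfEq _ _ hker.symm).trans e2)
  have he1 : ∀ x : V₁ ⊗[ℂ] V₂, e1 (Submodule.Quotient.mk x) = πT x := fun x => rfl
  have hF0 : ∀ x : V₁ ⊗[ℂ] V₂, F0 (πT x) = L x := by
    intro x
    show ((Submodule.quotEquivOfEq _ _ hker.symm).trans e2) (e1.symm (πT x)) = L x
    rw [← he1 x, LinearEquiv.symm_apply_apply]
    rfl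
  have hone : F0 (1 : ZT) = 1 := by
    rw [← hT₃, hF0, hT.2.2.1, hLdef]
    rw [TensorProduct.map_tmul, hA₃, hB₃, Algebra.TensorProduct.one_def]
  have hmul : ∀ x y : ZT, F0 (x * y) = F0 x * F0 y := by
    intro x y
    obtain ⟨u, rfl⟩ := hT₁ x
    obtain ⟨v, rfl⟩ := hT₁ y
    have husup : u ∈ ⨆ w : ℤ, T.grade w := by
      rw [T.isInternal.submodule_iSup_eq_top]
      trivial
    refine Submodule.iSup_induction (motive := fun u : V₁ ⊗[ℂ] V₂ =>
        F0 (πT u * πT v) = F0 (πT u) * F0 (πT v)) _ husup ?_ ?_ ?_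
    · intro w u hu
      rw [← hT₄ w u hu v, hF0, hF0, hF0]
      exact map_star_mul hT πA πB hA₂ hB₂ hA₄ hB₄ w u v hu
    · simp
    · intro u₁ u₂ ih₁ ih₂
      simp [map_add, add_mul, ih₁, ih₂]
  refine ⟨AlgEquiv.ofLinearEquiv F0 hone hmul, fun a b => ?_⟩
  show F0 (πT (a ⊗ₜ[ℂ] b)) = πA a ⊗ₜ[ℂ] πB b
  rw [hF0, hLdef, TensorProduct.map_tmul]

end
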